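/- Let d ≥ 2 and r ≥ 1. There exists a constant C > 0 with the following property. For all g, m ∈ GL(d,ℝ) with ‖m‖ ≤ r and ‖m⁻¹‖ ≤ r, for every singular value decomposition g = k·diag(α)·k' of g, and for every singular value decomposition m·g = κ·diag(β)·κ'' of m·g, one has sin∠(κ·e₁, m·(k·e₁)) ≤ C · (α 1)/(α 0), where m·(k·e₁) denotes the matrix m applied to the vector k·e₁. -/

import Mathlib

open Matrix

/-- The operator norm of a `d × d` real matrix acting on Euclidean `ℝ^d`. -/
noncomputable def opNorm {d : ℕ} (M : Matrix (Fin d) (Fin d) ℝ) : ℝ :=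
  ‖LinearMap.toContinuousLinearMap (Matrix.toEuclideanLin M)‖

/-- The action of a `d × d` real matrix on Euclidean `ℝ^d`. -/
noncomputable def appE {d : ℕ} (M : Matrix (Fin d) (Fin d) ℝ)
    (v : EuclideanSpace ℝ (Fin d)) : EuclideanSpace ℝ (Fin d) :=
  Matrix.toEuclideanLin M v

/-- `IsSVD g k α k'` means `g = k · diag(α) · k'` is a singular value decomposition:
`k, k'` are orthogonal and `α` is positive and nonincreasing. -/
def IsSVD {d : ℕ} (g k : Matrix (Fin d) (Fin d) ℝ) (α : Fin d → ℝ)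
    (k' : Matrix (Fin d) (Fin d) ℝ) : Prop :=
  k * kᵀ = 1 ∧ k' * k'ᵀ = 1 ∧ (∀ i, 0 < α i) ∧ Antitone α ∧
    g = k * Matrix.diagonal α * k'

/-- The sine of the angle between two vectors of Euclidean `ℝ^d`. -/
noncomputable def sinAngle {d : ℕ} (u v : EuclideanSpace ℝ (Fin d)) : ℝ :=
  Real.sin (InnerProductGeometry.angle u v)

/-- The first standard basis vector of Euclidean `ℝ^d`. -/
noncomputable def e1 {d : ℕ} (h : 0 < d) : EuclideanSpace ℝ (Fin d) :=
  EuclideanSpace.single ⟨0, h⟩ 1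

/-! Put `e = e₁`, `u = κ e` and `V = m k e`. Since `g k'ᵀ e = α₀ k e`, the vector `α₀ V` is the
image under `m g` of a unit vector, and the component of such an image orthogonal to the top left
singular vector `u` of `m g` has norm at most `β₁`; hence `α₀ ‖V‖ sin∠(u, V) ≤ β₁`. The min-max
principle, applied to a unit vector in the span of the top two right singular vectors of `m g`
that is orthogonal to the top right singular vector of `g`, gives `β₁ ≤ ‖m‖ α₁`. Finally
`‖V‖ ≥ 1 / ‖m⁻¹‖`, so `sin∠(u, V) ≤ ‖m‖ ‖m⁻¹‖ α₁ / α₀ ≤ r² α₁ / α₀`. -/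

open InnerProductGeometry
open scoped RealInnerProductSpace

lemma InnerProductGeometry.norm_mul_sin_angle_le_norm_sub_smul {V : Type*}
    [NormedAddCommGroup V] [InnerProductSpace ℝ V] (u v : V) (c : ℝ) :
    ‖v‖ * Real.sin (angle u v) ≤ ‖v - c • u‖ := by
  rcases eq_or_ne u 0 with rfl | hu
  · simp [angle_zero_left]
  have hu' : 0 < ‖u‖ := norm_pos_iff.2 hu
  have key : ⟪u, u⟫ * ⟪v, v⟫ - ⟪u, v⟫ * ⟪u, v⟫ ≤ (‖u‖ * ‖v - c • u‖) ^ 2 := by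
    rw [mul_pow, ← real_inner_self_eq_norm_sq, ← real_inner_self_eq_norm_sq]
    simp only [inner_sub_left, inner_sub_right, inner_smul_left, inner_smul_right,
      real_inner_comm u v, RCLike.conj_to_real]
    nlinarith [sq_nonneg (⟪u, v⟫ - c * ⟪u, u⟫)]
  refine le_of_mul_le_mul_left ?_ hu'
  calc ‖u‖ * (‖v‖ * Real.sin (angle u v)) = Real.sin (angle u v) * (‖u‖ * ‖v‖) := by ring
    _ = √(⟪u, u⟫ * ⟪v, v⟫ - ⟪u, v⟫ * ⟪u, v⟫) := sin_angle_mul_norm_mul_norm u v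
    _ ≤ √((‖u‖ * ‖v - c • u‖) ^ 2) := Real.sqrt_le_sqrt key
    _ = ‖u‖ * ‖v - c • u‖ := Real.sqrt_sq (by positivity)

section EuclideanAction

variable {d : ℕ}

lemma appE_mul (A B : Matrix (Fin d) (Fin d) ℝ) (v : EuclideanSpace ℝ (Fin d)) :
    appE (A * B) v = appE A (appE B v) := by
  simp [appE]

lemma appE_one (v : EuclideanSpace ℝ (Fin d)) : appE 1 v = v := by
  simp [appE]

lemma appE_smul (M : Matrix (Fin d) (Fin d) ℝ) (c : ℝ) (v : EuclideanSpace ℝ (Fin d)) :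
    appE M (c • v) = c • appE M v :=
  map_smul (toEuclideanLin M) c v

lemma appE_sub (M : Matrix (Fin d) (Fin d) ℝ) (v w : EuclideanSpace ℝ (Fin d)) :
    appE M (v - w) = appE M v - appE M w :=
  map_sub (toEuclideanLin M) v w

lemma opNorm_nonneg (M : Matrix (Fin d) (Fin d) ℝ) : 0 ≤ opNorm M :=
  norm_nonneg _

lemma norm_appE_le (M : Matrix (Fin d) (Fin d) ℝ) (v : EuclideanSpace ℝ (Fin d)) :
    ‖appE M v‖ ≤ opNorm M * ‖v‖ :=
  (LinearMap.toContinuousLinearMap (toEuclideanLin M)).le_opNorm v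

lemma norm_le_opNorm_inv_mul {m : Matrix (Fin d) (Fin d) ℝ} (hm : IsUnit m.det)
    (v : EuclideanSpace ℝ (Fin d)) : ‖v‖ ≤ opNorm m⁻¹ * ‖appE m v‖ := by
  simpa only [← appE_mul, nonsing_inv_mul m hm, appE_one] using norm_appE_le m⁻¹ (appE m v)

lemma inner_appE_appE {k : Matrix (Fin d) (Fin d) ℝ} (hk : k * kᵀ = 1)
    (x y : EuclideanSpace ℝ (Fin d)) : ⟪appE k x, appE k y⟫ = ⟪x, y⟫ := by
  rw [appE, ← LinearMap.adjoint_inner_right, ← toEuclideanLin_conjTranspose_eq_adjoint,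
    conjTranspose_eq_transpose_of_trivial]
  change ⟪x, appE kᵀ (appE k y)⟫ = _
  rw [← appE_mul, mul_eq_one_comm.mp hk, appE_one]

lemma norm_appE {k : Matrix (Fin d) (Fin d) ℝ} (hk : k * kᵀ = 1)
    (x : EuclideanSpace ℝ (Fin d)) : ‖appE k x‖ = ‖x‖ :=
  ((toEuclideanLin k).isometryOfInner (inner_appE_appE hk)).norm_map x

lemma norm_appE_transpose {k : Matrix (Fin d) (Fin d) ℝ} (hk : k * kᵀ = 1)
    (x : EuclideanSpace ℝ (Fin d)) : ‖appE kᵀ x‖ = ‖x‖ :=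
  norm_appE (by rw [transpose_transpose, mul_eq_one_comm.mp hk]) x

lemma appE_diagonal_apply (α : Fin d → ℝ) (y : EuclideanSpace ℝ (Fin d)) (i : Fin d) :
    appE (diagonal α) y i = α i * y i := by
  simp [appE, mulVec_diagonal]

open scoped Matrix.Norms.L2Operator in
lemma opNorm_diagonal (α : Fin d → ℝ) : opNorm (diagonal α) = ‖α‖ :=
  l2_opNorm_diagonal α

lemma appE_diagonal_update (α : Fin d → ℝ) (i : Fin d) (y : EuclideanSpace ℝ (Fin d)) :
    appE (diagonal (Function.update α i 0)) y
      = appE (diagonal α) y - (α i * y i) • EuclideanSpace.single i 1 := by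
  ext j
  rcases eq_or_ne j i with rfl | hj
  · simp [appE_diagonal_apply]
  · simp [appE_diagonal_apply, hj]

lemma le_norm_appE_diagonal {α : Fin d → ℝ} {c : ℝ} (hc : 0 ≤ c) {y : EuclideanSpace ℝ (Fin d)}
    (h : ∀ i, y i ≠ 0 → c ≤ α i) : c * ‖y‖ ≤ ‖appE (diagonal α) y‖ := by
  refine (sq_le_sq₀ (by positivity) (norm_nonneg _)).1 ?_
  rw [mul_pow, EuclideanSpace.norm_sq_eq, EuclideanSpace.norm_sq_eq, Finset.mul_sum]
  refine Finset.sum_le_sum fun i _ => ?_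
  rw [appE_diagonal_apply, Real.norm_eq_abs, Real.norm_eq_abs, sq_abs, sq_abs, mul_pow]
  rcases eq_or_ne (y i) 0 with hy | hy
  · simp [hy]
  · have := h i hy
    gcongr

end EuclideanAction

section SingularValues

variable {n : ℕ}

lemma norm_appE_diagonal_update_zero_le {α : Fin (n + 2) → ℝ} (hα : ∀ i, 0 ≤ α i)
    (hanti : Antitone α) (y : EuclideanSpace ℝ (Fin (n + 2))) :
    ‖appE (diagonal (Function.update α 0 0)) y‖ ≤ α 1 * ‖y‖ := by
  refine (norm_appE_le _ y).trans (mul_le_mul_of_nonneg_right ?_ (norm_nonneg y))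
  rw [opNorm_diagonal, pi_norm_le_iff_of_nonneg (hα 1)]
  intro i
  rcases eq_or_ne i 0 with rfl | hi
  · simpa using hα 1
  · rw [Function.update_of_ne hi, Real.norm_of_nonneg (hα i)]
    exact hanti (Fin.one_le_of_ne_zero hi)

lemma exists_ne_zero_support_le_one (φ : EuclideanSpace ℝ (Fin (n + 2)) →ₗ[ℝ] ℝ) :
    ∃ y : EuclideanSpace ℝ (Fin (n + 2)), y ≠ 0 ∧ (∀ i, y i ≠ 0 → i ≤ 1) ∧ φ y = 0 := by
  set e₀ := EuclideanSpace.single (0 : Fin (n + 2)) (1 : ℝ)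
  set e₁ := EuclideanSpace.single (1 : Fin (n + 2)) (1 : ℝ)
  by_cases h₀ : φ e₀ = 0
  · refine ⟨e₀, by simp [e₀], fun i hi => ?_, h₀⟩
    rcases eq_or_ne i 0 with rfl | h
    · exact Fin.zero_le _
    · simp [e₀, h] at hi
  refine ⟨φ e₁ • e₀ - φ e₀ • e₁, fun h => h₀ ?_, fun i hi => ?_, ?_⟩
  · simpa [e₀, e₁] using congrArg (· 1) h
  · by_contra hlt
    have h0 : i ≠ 0 := by rintro rfl; exact hlt (Fin.zero_le _)
    have h1 : i ≠ 1 := by rintro rfl; exact hlt le_rfl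
    simp [e₀, e₁, h0, h1] at hi
  · simp only [map_sub, map_smul, smul_eq_mul]
    ring

variable {g k k' : Matrix (Fin (n + 2)) (Fin (n + 2)) ℝ} {α : Fin (n + 2) → ℝ}

lemma IsSVD.appE_eq (h : IsSVD g k α k') (x : EuclideanSpace ℝ (Fin (n + 2))) :
    appE g x = appE k (appE (diagonal α) (appE k' x)) := by
  rw [h.2.2.2.2, appE_mul, appE_mul]

lemma IsSVD.appE_transpose_single_zero (h : IsSVD g k α k') :
    appE g (appE k'ᵀ (EuclideanSpace.single 0 1)) = α 0 • appE k (EuclideanSpace.single 0 1) := by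
  have hdiag : appE (diagonal α) (EuclideanSpace.single 0 1) = α 0 • EuclideanSpace.single 0 1 := by
    ext i
    rcases eq_or_ne i 0 with rfl | hi <;> simp [appE_diagonal_apply, *]
  rw [h.appE_eq, ← appE_mul k', h.2.1, appE_one, hdiag, appE_smul]

lemma IsSVD.norm_mul_sinAngle_le (h : IsSVD g k α k') (x : EuclideanSpace ℝ (Fin (n + 2))) :
    ‖appE g x‖ * sinAngle (appE k (EuclideanSpace.single 0 1)) (appE g x) ≤ α 1 * ‖x‖ := by
  set z := appE k' x
  have hrest : appE g x - (α 0 * z 0) • appE k (EuclideanSpace.single 0 1)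
      = appE k (appE (diagonal (Function.update α 0 0)) z) := by
    rw [appE_diagonal_update, appE_sub, appE_smul, h.appE_eq]
  obtain ⟨hk, hk', hα, hanti, -⟩ := h
  calc ‖appE g x‖ * sinAngle (appE k (EuclideanSpace.single 0 1)) (appE g x)
      ≤ ‖appE g x - (α 0 * z 0) • appE k (EuclideanSpace.single 0 1)‖ :=
        norm_mul_sin_angle_le_norm_sub_smul _ _ _
    _ = ‖appE (diagonal (Function.update α 0 0)) z‖ := by rw [hrest, norm_appE hk]
    _ ≤ α 1 * ‖z‖ := norm_appE_diagonal_update_zero_le (fun i => (hα i).le) hanti z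
    _ = α 1 * ‖x‖ := by rw [norm_appE hk']

lemma IsSVD.norm_appE_le_of_apply_zero_eq_zero (h : IsSVD g k α k')
    {x : EuclideanSpace ℝ (Fin (n + 2))} (hx : appE k' x 0 = 0) : ‖appE g x‖ ≤ α 1 * ‖x‖ := by
  have hdiag : appE (diagonal α) (appE k' x)
      = appE (diagonal (Function.update α 0 0)) (appE k' x) := by
    rw [appE_diagonal_update, hx, mul_zero, zero_smul, sub_zero]
  rw [h.appE_eq, norm_appE h.1, hdiag, ← norm_appE h.2.1 x]
  obtain ⟨-, -, hα, hanti, -⟩ := h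
  exact norm_appE_diagonal_update_zero_le (fun i => (hα i).le) hanti _

lemma IsSVD.le_norm_appE_transpose (h : IsSVD g k α k') {y : EuclideanSpace ℝ (Fin (n + 2))}
    (hy : ∀ i, y i ≠ 0 → i ≤ 1) : α 1 * ‖y‖ ≤ ‖appE g (appE k'ᵀ y)‖ := by
  rw [h.appE_eq, ← appE_mul k', h.2.1, appE_one, norm_appE h.1]
  exact le_norm_appE_diagonal (h.2.2.1 1).le fun i hi => h.2.2.2.1 (hy i hi)

lemma IsSVD.apply_one_le_opNorm_mul {m κ κ'' : Matrix (Fin (n + 2)) (Fin (n + 2)) ℝ}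
    {β : Fin (n + 2) → ℝ} (hg : IsSVD g k α k') (hmg : IsSVD (m * g) κ β κ'') :
    β 1 ≤ opNorm m * α 1 := by
  obtain ⟨y, hy, hsupp, hker⟩ := exists_ne_zero_support_le_one
    ((EuclideanSpace.proj 0 : EuclideanSpace ℝ (Fin (n + 2)) →L[ℝ] ℝ).toLinearMap ∘ₗ
      toEuclideanLin (k' * κ''ᵀ))
  set x := appE κ''ᵀ y
  have hx : ‖x‖ = ‖y‖ := norm_appE_transpose hmg.2.1 y
  have hkx : appE k' x 0 = 0 := by simpa [x, appE, mulVec_mulVec] using hker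
  refine le_of_mul_le_mul_right ?_ (norm_pos_iff.2 hy)
  calc β 1 * ‖y‖ ≤ ‖appE (m * g) x‖ := hmg.le_norm_appE_transpose hsupp
    _ = ‖appE m (appE g x)‖ := by rw [appE_mul]
    _ ≤ opNorm m * ‖appE g x‖ := norm_appE_le m _
    _ ≤ opNorm m * (α 1 * ‖x‖) := by
      gcongr
      · exact opNorm_nonneg m
      · exact hg.norm_appE_le_of_apply_zero_eq_zero hkx
    _ = opNorm m * α 1 * ‖y‖ := by rw [hx, mul_assoc]

lemma IsSVD.mul_norm_mul_sinAngle_le {m κ κ'' : Matrix (Fin (n + 2)) (Fin (n + 2)) ℝ}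
    {β : Fin (n + 2) → ℝ} (hg : IsSVD g k α k') (hmg : IsSVD (m * g) κ β κ'') :
    α 0 * ‖appE m (appE k (EuclideanSpace.single 0 1))‖ *
        sinAngle (appE κ (EuclideanSpace.single 0 1)) (appE m (appE k (EuclideanSpace.single 0 1)))
      ≤ opNorm m * α 1 := by
  have hα₀ : 0 < α 0 := hg.2.2.1 0
  have h := hmg.norm_mul_sinAngle_le (appE k'ᵀ (EuclideanSpace.single 0 1))
  rw [appE_mul, hg.appE_transpose_single_zero, appE_smul, norm_smul, sinAngle,
    angle_smul_right_of_pos _ _ hα₀, norm_appE_transpose hg.2.1, PiLp.norm_single, norm_one,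
    mul_one, Real.norm_of_nonneg hα₀.le] at h
  exact h.trans (hg.apply_one_le_opNorm_mul hmg)

end SingularValues

/-- Uniformly over `m` in a compact part of `GL(d,ℝ)`, the attracting line `Ξ(m·g)` of an
SVD of `m·g` is at sine-distance at most `C · (α 1)/(α 0)` from `m · Ξ(g)`. -/
theorem stmt5 (d : ℕ) (hd : 2 ≤ d) (r : ℝ) (hr : 1 ≤ r) :
    ∃ C : ℝ, 0 < C ∧
      ∀ g m : Matrix (Fin d) (Fin d) ℝ, IsUnit g.det → IsUnit m.det →
        opNorm m ≤ r → opNorm m⁻¹ ≤ r →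
        ∀ (k : Matrix (Fin d) (Fin d) ℝ) (α : Fin d → ℝ)
          (k' : Matrix (Fin d) (Fin d) ℝ), IsSVD g k α k' →
        ∀ (κ : Matrix (Fin d) (Fin d) ℝ) (β : Fin d → ℝ)
          (κ'' : Matrix (Fin d) (Fin d) ℝ), IsSVD (m * g) κ β κ'' →
          sinAngle (appE κ (e1 (by omega))) (appE m (appE k (e1 (by omega))))
            ≤ C * (α ⟨1, by omega⟩ / α ⟨0, by omega⟩) := by
  obtain ⟨n, rfl⟩ := Nat.exists_eq_add_of_le' hd
  refine ⟨r ^ 2, by positivity, fun g m _ hm hmr hmir k α k' hg κ β κ'' hmg => ?_⟩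
  set e := EuclideanSpace.single (0 : Fin (n + 2)) (1 : ℝ)
  set V := appE m (appE k e)
  set s := sinAngle (appE κ e) V
  change s ≤ r ^ 2 * (α 1 / α 0)
  have hα₀ : 0 < α 0 := hg.2.2.1 0
  have hV : 1 ≤ r * ‖V‖ := calc
    1 = ‖appE k e‖ := by simp [e, norm_appE hg.1]
    _ ≤ opNorm m⁻¹ * ‖V‖ := norm_le_opNorm_inv_mul hm _
    _ ≤ r * ‖V‖ := by gcongr
  have hs : α 0 * ‖V‖ * s ≤ r * α 1 :=
    (hg.mul_norm_mul_sinAngle_le hmg).trans (by gcongr; exact (hg.2.2.1 1).le)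
  rw [← mul_div_assoc, le_div_iff₀ hα₀]
  calc s * α 0 ≤ s * α 0 * (r * ‖V‖) :=
        le_mul_of_one_le_right (mul_nonneg (sin_angle_nonneg _ _) hα₀.le) hV
    _ = r * (α 0 * ‖V‖ * s) := by ring
    _ ≤ r * (r * α 1) := by gcongr
    _ = r ^ 2 * α 1 := by ring
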